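/- arXiv:1512.05228 — 3 statements merged into one kernel-verified Lean document; each statement's English description precedes it below -/
import Mathlib

section
/- For P ∈ (0,1) and k > 0, the equation P^{1/k}·ln P = k·(1-P^{1/k})·ln(1-P^{1/k}) holds if and only if P^{1/k} = 1/2 (equivalently k = -ln P / ln 2). -/
/-!
Put `x = P ^ (1 / k) ∈ (0, 1)`, so that `log P = k log x`. Dividing by `k x (1 - x)`, the equation
becomes `log x / (x - 1) = log (1 - x) / ((1 - x) - 1)`: the secants of `log` through `1` from `x`
and from `1 - x` have the same slope. By strict concavity of `log` this slope is strictly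
decreasing, so `x = 1 - x`.
-/

open Real Set

theorem strictAntiOn_log_div_sub_one : StrictAntiOn (fun t : ℝ => log t / (t - 1)) (Ioo 0 1) := by
  intro x hx y hy hxy
  have key := strictConcaveOn_log_Ioi.secant_strict_mono (a := 1) (by norm_num) hx.1 hy.1
    hx.2.ne hy.2.ne hxy
  simpa only [log_one, sub_zero] using key

theorem mul_log_eq_one_sub_mul_log_one_sub_iff {x : ℝ} (hx0 : 0 < x) (hx1 : x < 1) :
    x * log x = (1 - x) * log (1 - x) ↔ x = 1 / 2 := by
  constructor
  · intro h
    have hslope : log x / (x - 1) = log (1 - x) / ((1 - x) - 1) := by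
      rw [div_eq_div_iff (by linarith) (by linarith)]
      linarith
    have := strictAntiOn_log_div_sub_one.injOn ⟨hx0, hx1⟩ ⟨by linarith, by linarith⟩ hslope
    linarith
  · rintro rfl
    norm_num

theorem rpow_one_div_eq_half_iff {P k : ℝ} (hP : 0 < P) (hk : 0 < k) :
    P ^ (1 / k) = 1 / 2 ↔ k = -log P / log 2 := by
  have hlog2 : 0 < log 2 := log_pos one_lt_two
  calc P ^ (1 / k) = 1 / 2 ↔ log (P ^ (1 / k)) = log (1 / 2) :=
        (log_injOn_pos.eq_iff (rpow_pos_of_pos hP _) (by norm_num)).symm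
    _ ↔ log P / k = -log 2 := by rw [log_rpow hP, one_div, one_div, log_inv, div_eq_inv_mul]
    _ ↔ k = -log P / log 2 := by
        rw [div_eq_iff hk.ne', eq_div_iff hlog2.ne']
        constructor <;> intro h <;> linarith

/-- First-order condition: P^{1/k}·ln P = k·(1-P^{1/k})·ln(1-P^{1/k}) iff P^{1/k} = 1/2
(equivalently k = -ln P / ln 2). -/
theorem stmt1 (P k : ℝ) (hP0 : 0 < P) (hP1 : P < 1) (hk : 0 < k) :
    (P ^ (1 / k) * Real.log P
        = k * (1 - P ^ (1 / k)) * Real.log (1 - P ^ (1 / k))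
      ↔ P ^ (1 / k) = (1 / 2 : ℝ)) ∧
    (P ^ (1 / k) = (1 / 2 : ℝ) ↔ k = -Real.log P / Real.log 2) := by
  refine ⟨?_, rpow_one_div_eq_half_iff hP0 hk⟩
  set x := P ^ (1 / k)
  have hlogP : log P = k * log x := by
    rw [log_rpow hP0]
    field_simp
  rw [← mul_log_eq_one_sub_mul_log_one_sub_iff (rpow_pos_of_pos hP0 _)
    (rpow_lt_one hP0.le hP1 (by positivity)), hlogP, mul_left_comm, mul_assoc]
  exact mul_right_inj' hk.ne'
end

section
/- For y > 0, α ∈ (0,1), m ≥ 1, N > 0, the derivative of f(y) = -N·y / ln(1-(1-α)^{1/(m y)}) is negative for y < ln(1-α)/(m·ln(1/2)) and positive for y > ln(1-α)/(m·ln(1/2)). -/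
/-!
With `c = log (1 - α) / m` and `u = (1 - α) ^ (1 / (m y)) = exp (c / y)`, one computes
`f' y = -N (H u - H (1 - u)) / ((1 - u) log² (1 - u))` where `H = negMulLog`, and `u < 1/2`
exactly when `y < c / log (1/2)`. For `u < v` with `u + v = 1`, the inequality `H v < H u` is
`log u / v < log v / u`, i.e. the monotonicity of the slope `log t / (1 - t)` of the secant of the
concave function `log` through `1`.
-/

open Real

lemma log_div_one_sub_lt_of_lt {u v : ℝ} (hu : 0 < u) (huv : u < v) (hv : v < 1) :
    log u / (1 - u) < log v / (1 - v) := by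
  have h := strictConcaveOn_log_Ioi.secant_strict_mono (Set.mem_Ioi.mpr one_pos)
    (Set.mem_Ioi.mpr hu) (Set.mem_Ioi.mpr (hu.trans huv)) (by linarith) (by linarith) huv
  rw [log_one, sub_zero, sub_zero] at h
  rwa [← neg_sub v, ← neg_sub u, div_neg, div_neg, neg_lt_neg_iff]

lemma negMulLog_lt_negMulLog_of_add_eq_one {u v : ℝ} (hu : 0 < u) (huv : u < v)
    (hsum : u + v = 1) : negMulLog v < negMulLog u := by
  have h := log_div_one_sub_lt_of_lt hu huv (by linarith)
  rw [show 1 - u = v by linarith, show 1 - v = u by linarith,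
    div_lt_div_iff₀ (by linarith) hu] at h
  simp only [negMulLog]
  linarith

lemma hasDerivAt_div_log_one_sub_exp_div {c y : ℝ} (h : c / y < 0) :
    HasDerivAt (fun t => t / log (1 - exp (c / t)))
      ((negMulLog (exp (c / y)) - negMulLog (1 - exp (c / y))) /
        ((1 - exp (c / y)) * log (1 - exp (c / y)) ^ 2)) y := by
  have hy : y ≠ 0 := by rintro rfl; simp at h
  have hu1 : exp (c / y) < 1 := exp_lt_one_iff.mpr h
  have h1u : 1 - exp (c / y) ≠ 0 := by linarith
  have hlog : log (1 - exp (c / y)) ≠ 0 :=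
    (log_neg (by linarith) (by linarith [exp_pos (c / y)])).ne
  have hexp : HasDerivAt (fun t => exp (c / t)) (exp (c / y) * (-c / y ^ 2)) y := by
    simpa [div_eq_mul_inv] using ((hasDerivAt_inv hy).const_mul c).exp
  refine ((hasDerivAt_id' y).div ((hexp.const_sub 1).log h1u) hlog).congr_deriv ?_
  simp only [negMulLog, log_exp]
  field_simp
  ring

lemma one_sub_mul_log_one_sub_sq_pos {u : ℝ} (hu0 : 0 < u) (hu1 : u < 1) :
    0 < (1 - u) * log (1 - u) ^ 2 :=
  mul_pos (by linarith) (sq_pos_of_neg (log_neg (by linarith) (by linarith)))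

lemma exp_div_lt_half_iff {c y : ℝ} (hy : 0 < y) :
    exp (c / y) < 1 / 2 ↔ y < c / log (1 / 2) := by
  rw [← lt_log_iff_exp_lt one_half_pos, div_lt_iff₀ hy, mul_comm,
    lt_div_iff_of_neg (log_neg one_half_pos one_half_lt_one)]

lemma half_lt_exp_div_iff {c y : ℝ} (hy : 0 < y) :
    1 / 2 < exp (c / y) ↔ c / log (1 / 2) < y := by
  rw [← log_lt_iff_lt_exp one_half_pos, lt_div_iff₀ hy, mul_comm,
    div_lt_iff_of_neg (log_neg one_half_pos one_half_lt_one)]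

lemma deriv_div_log_one_sub_exp_div_pos {c y : ℝ} (hy : 0 < y) (hyc : y < c / log (1 / 2)) :
    0 < deriv (fun t => t / log (1 - exp (c / t))) y := by
  have hu := (exp_div_lt_half_iff hy).mpr hyc
  rw [(hasDerivAt_div_log_one_sub_exp_div (exp_lt_one_iff.mp (by linarith))).deriv]
  refine div_pos (sub_pos.mpr ?_) (one_sub_mul_log_one_sub_sq_pos (exp_pos _) (by linarith))
  exact negMulLog_lt_negMulLog_of_add_eq_one (exp_pos _) (by linarith) (by ring)

lemma deriv_div_log_one_sub_exp_div_neg {c y : ℝ} (hc : c < 0) (hyc : c / log (1 / 2) < y) :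
    deriv (fun t => t / log (1 - exp (c / t))) y < 0 := by
  have hy : 0 < y := (div_pos_of_neg_of_neg hc (log_neg one_half_pos one_half_lt_one)).trans hyc
  have hu := (half_lt_exp_div_iff hy).mpr hyc
  have hcy : c / y < 0 := div_neg_of_neg_of_pos hc hy
  rw [(hasDerivAt_div_log_one_sub_exp_div hcy).deriv]
  refine div_neg_of_neg_of_pos (sub_neg.mpr ?_)
    (one_sub_mul_log_one_sub_sq_pos (exp_pos _) (exp_lt_one_iff.mpr hcy))
  exact negMulLog_lt_negMulLog_of_add_eq_one (by linarith [exp_lt_one_iff.mpr hcy]) (by linarith)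
    (by ring)

/-- The derivative of f(y) = -N·y / ln(1-(1-α)^{1/(m y)}) is negative for
y < ln(1-α)/(m·ln(1/2)) and positive for y > ln(1-α)/(m·ln(1/2)). -/
theorem stmt3 (α N : ℝ) (m : ℕ) (hm : 1 ≤ m) (hα : α ∈ Set.Ioo (0:ℝ) 1) (hN : 0 < N)
    (f : ℝ → ℝ)
    (hf : ∀ y, f y = -(N * y) / Real.log (1 - (1 - α) ^ (1 / ((m : ℝ) * y)))) :
    (∀ y, 0 < y → y < Real.log (1 - α) / ((m : ℝ) * Real.log (1 / 2)) →
        deriv f y < 0) ∧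
    (∀ y, Real.log (1 - α) / ((m : ℝ) * Real.log (1 / 2)) < y →
        0 < deriv f y) := by
  obtain ⟨hα0, hα1⟩ := hα
  have hc : log (1 - α) / m < 0 :=
    div_neg_of_neg_of_pos (log_neg (by linarith) (by linarith)) (by exact_mod_cast hm)
  have hf_eq : f = fun y => -N * (y / log (1 - exp (log (1 - α) / m / y))) := by
    funext y
    rw [hf, rpow_def_of_pos (by linarith)]
    ring_nf
  have hthreshold : log (1 - α) / (m * log (1 / 2)) = log (1 - α) / m / log (1 / 2) :=
    (div_div _ _ _).symm
  rw [hthreshold, hf_eq, deriv_const_mul_field']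
  exact ⟨fun y hy hyc => mul_neg_of_neg_of_pos (neg_neg_of_pos hN)
      (deriv_div_log_one_sub_exp_div_pos hy hyc),
    fun y hyc => mul_pos_of_neg_of_neg (neg_neg_of_pos hN)
      (deriv_div_log_one_sub_exp_div_neg hc hyc)⟩
end

section
/- Let α ∈ (0,1) and M, y ≥ 1, and define E[T](x) = (|E| t_r/ln 2)·x + (−t_t·y/ln(1−(1−α)^{1/(M y)}))·(|E|−M+|U|·(1/2)^x) for x ≥ 0. If |U| ≤ |E| t_r ln(1−(1−α)^{1/(M y)}) / (−t_t y (ln 2)^2), then E[T] is nondecreasing on [0,∞) and minimized at x = 0; otherwise E[T] is minimized at x* = ln( −t_r|E| ln(1−(1−α)^{1/(M y)}) / (t_t y |U| (ln 2)^2) ) / (−ln 2). -/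
/-- Core convexity-type inequality for f(x) = A x + B exp(-c x). -/
lemma stmt4_core (A B c s t : ℝ) (hB : 0 ≤ B) :
    A*s + B*Real.exp (-(c*s)) + (t-s)*(A - B*c*Real.exp (-(c*s))) ≤
      A*t + B*Real.exp (-(c*t)) := by
  have hmul : Real.exp (-(c*t)) = Real.exp (-(c*s)) * Real.exp (-(c*(t-s))) := by
    rw [← Real.exp_add]; ring_nf
  have h2 : (-(c*(t-s))) + 1 ≤ Real.exp (-(c*(t-s))) := Real.add_one_le_exp _
  have hp : (0:ℝ) ≤ Real.exp (-(c*s)) := (Real.exp_pos _).le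
  rw [hmul]
  nlinarith [mul_le_mul_of_nonneg_left h2 (mul_nonneg hB hp)]

/-- Minimization of the expected worst-case execution time
E[T](x) = (|E| t_r/ln 2)·x + (−t_t·y/ln(1−(1−α)^{1/(M y)}))·(|E|−M+|U|·(1/2)^x)
over x ≥ 0: if |U| ≤ U₀ then E[T] is nondecreasing on [0,∞) and minimized at x = 0;
otherwise it is minimized at
x* = ln(−t_r|E| ln(1−(1−α)^{1/(M y)}) / (t_t y |U| (ln 2)^2)) / (−ln 2). -/
theorem stmt4 (Ecard Ucard α tr tt : ℝ) (M y : ℕ)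
    (hE : 0 < Ecard) (hU : 0 ≤ Ucard) (hM : 1 ≤ M) (hy : 1 ≤ y)
    (hα : α ∈ Set.Ioo (0:ℝ) 1) (htr : 0 < tr) (htt : 0 < tt)
    (ET : ℝ → ℝ)
    (hET : ∀ x, ET x = Ecard * tr / Real.log 2 * x +
        (-(tt * (y : ℝ)) / Real.log (1 - (1 - α) ^ (1 / ((M : ℝ) * (y : ℝ))))) *
          (Ecard - (M : ℝ) + Ucard * (1 / 2 : ℝ) ^ x)) :
    (Ucard ≤ Ecard * tr * Real.log (1 - (1 - α) ^ (1 / ((M : ℝ) * (y : ℝ)))) /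
          (-(tt * (y : ℝ) * (Real.log 2) ^ 2)) →
      MonotoneOn ET (Set.Ici (0:ℝ)) ∧ ∀ x, 0 ≤ x → ET 0 ≤ ET x) ∧
    (Ecard * tr * Real.log (1 - (1 - α) ^ (1 / ((M : ℝ) * (y : ℝ)))) /
          (-(tt * (y : ℝ) * (Real.log 2) ^ 2)) < Ucard →
      ∀ x, 0 ≤ x →
        ET (Real.log (-(tr * Ecard * Real.log (1 - (1 - α) ^ (1 / ((M : ℝ) * (y : ℝ))))) /
              (tt * (y : ℝ) * Ucard * (Real.log 2) ^ 2)) / (-Real.log 2)) ≤ ET x) := by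
  obtain ⟨hα0, hα1⟩ := hα
  set L : ℝ := Real.log (1 - (1 - α) ^ (1 / ((M : ℝ) * (y : ℝ)))) with hLdef
  have hyR : (1:ℝ) ≤ (y:ℝ) := by exact_mod_cast hy
  have hMR : (1:ℝ) ≤ (M:ℝ) := by exact_mod_cast hM
  have hzpos : 0 < 1 / ((M : ℝ) * (y : ℝ)) := by positivity
  have hp0 : 0 < (1 - α) ^ (1 / ((M : ℝ) * (y : ℝ))) :=
    Real.rpow_pos_of_pos (by linarith) _
  have hp1 : (1 - α) ^ (1 / ((M : ℝ) * (y : ℝ))) < 1 :=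
    Real.rpow_lt_one (by linarith) (by linarith) hzpos
  have hL : L < 0 := Real.log_neg (by linarith) (by linarith)
  have hlog2 : (0:ℝ) < Real.log 2 := Real.log_pos (by norm_num)
  set A : ℝ := Ecard * tr / Real.log 2 with hAdef
  set C : ℝ := -(tt * (y:ℝ)) / L with hCdef
  have hA : 0 < A := by positivity
  have hC : 0 < C := div_pos_iff.mpr (Or.inr ⟨by nlinarith, hL⟩)
  set B : ℝ := C * Ucard with hBdef
  have hB : 0 ≤ B := mul_nonneg hC.le hU
  set c : ℝ := Real.log 2 with hcdef
  set K : ℝ := C * (Ecard - (M:ℝ)) with hKdef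
  have hrw : ∀ x : ℝ, ET x = A * x + B * Real.exp (-(c * x)) + K := by
    intro x
    rw [hET x]
    have h12 : ((1:ℝ)/2) ^ x = Real.exp (-(c * x)) := by
      rw [Real.rpow_def_of_pos (by norm_num : (0:ℝ) < 1/2)]
      congr 1
      rw [Real.log_div one_ne_zero two_ne_zero, Real.log_one]
      ring
    rw [h12, hAdef, hBdef, hKdef, hCdef]
    ring
  constructor
  · -- monotone case
    intro h
    have h' : Ucard * (tt * (y:ℝ) * (Real.log 2)^2) ≤ Ecard * tr * (-L) := by
      rw [div_neg] at h
      have h2 : -(Ecard * tr * L / (tt * (y:ℝ) * (Real.log 2)^2))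
          = Ecard * tr * (-L) / (tt * (y:ℝ) * (Real.log 2)^2) := by
        rw [← neg_div]; ring_nf
      rw [h2, le_div_iff₀ (by positivity)] at h
      linarith
    have hBc : B * c ≤ A := by
      have hBceq : B * c = tt * (y:ℝ) * Ucard * Real.log 2 / (-L) := by
        rw [hBdef, hCdef, neg_div, div_neg]; ring
      rw [hBceq, hAdef, div_le_div_iff₀ (by linarith) hlog2]
      nlinarith
    have hmono : MonotoneOn ET (Set.Ici (0:ℝ)) := by
      intro s hs t ht hst
      simp only [Set.mem_Ici] at hs ht
      rw [hrw s, hrw t]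
      have hcore := stmt4_core A B c s t hB
      have hexple : Real.exp (-(c*s)) ≤ 1 := by
        rw [Real.exp_le_one_iff]
        exact neg_nonpos.mpr (mul_nonneg hlog2.le hs)
      have hmul : B*c*Real.exp (-(c*s)) ≤ B*c :=
        mul_le_of_le_one_right (mul_nonneg hB hlog2.le) hexple
      have hBc' : 0 ≤ A - B*c*Real.exp (-(c*s)) := by linarith
      have hprod : 0 ≤ (t-s)*(A - B*c*Real.exp (-(c*s))) :=
        mul_nonneg (sub_nonneg.mpr hst) hBc'
      linarith
    exact ⟨hmono, fun x hx => hmono (Set.self_mem_Ici) hx hx⟩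
  · -- minimum at interior point
    intro h
    have hyR' : (0:ℝ) < (y:ℝ) := by linarith
    have hD : 0 < tt * (y:ℝ) * (Real.log 2)^2 :=
      mul_pos (mul_pos htt hyR') (pow_pos hlog2 2)
    have hnum : Ecard * tr * L < 0 := mul_neg_of_pos_of_neg (mul_pos hE htr) hL
    have hU0pos : 0 < Ecard * tr * L / (-(tt * (y:ℝ) * (Real.log 2)^2)) :=
      div_pos_iff.mpr (Or.inr ⟨hnum, by linarith⟩)
    have hUpos : 0 < Ucard := lt_trans hU0pos h
    set r : ℝ := -(tr * Ecard * L) / (tt * (y:ℝ) * Ucard * (Real.log 2)^2) with hrdef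
    have hrpos : 0 < r := by
      apply div_pos
      · have := mul_neg_of_pos_of_neg (mul_pos htr hE) hL
        linarith
      · exact mul_pos (mul_pos (mul_pos htt hyR') hUpos) (pow_pos hlog2 2)
    set xs : ℝ := Real.log r / (-Real.log 2) with hxsdef
    intro x hx
    rw [hrw x, hrw xs]
    have hexp_xs : Real.exp (-(c * xs)) = r := by
      have hcx : -(c * xs) = Real.log r := by
        rw [hxsdef, hcdef]
        field_simp
      rw [hcx, Real.exp_log hrpos]
    have hstat : B * c * Real.exp (-(c * xs)) = A := by
      rw [hexp_xs, hBdef, hCdef, hAdef, hrdef]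
      have hLne : L ≠ 0 := ne_of_lt hL
      have hlog2ne : Real.log 2 ≠ 0 := ne_of_gt hlog2
      field_simp
      ring
    have hcore := stmt4_core A B c xs x hB
    rw [hstat] at hcore
    simp at hcore
    linarith
end
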